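/- Let F be the map on configurations Q ⊂ ℂ (n points) defined by F(Q) = s·Q° + t·bc(Q) + t·b(Q°) − b(s·Q°), where Q° = Q − bc(Q), bc(Q) = (1/n)∑_{q∈Q} q, s,t are roots of unity with s^m = t^m = 1, and b is any function on balanced configurations. Then F^m = id; more generally F^k(Q) = s^k Q° + t^k bc(Q) + t^k b(Q°) − b(s^k Q°) for all k ≥ 1. -/

import Mathlib

open Finset

/-- The barycenter `bc(Q) = (1/n)∑ᵢ qᵢ` of an `n`-tuple of complex numbers. -/
noncomputable def bc (n : ℕ) (Q : Fin n → ℂ) : ℂ := (∑ i, Q i) / n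

/-- The centered (balanced) configuration `Q° = Q − bc(Q)`. -/
noncomputable def ctr (n : ℕ) (Q : Fin n → ℂ) : Fin n → ℂ := fun i => Q i - bc n Q

/-!
In the coordinates `Q ↦ (Q°, bc(Q) + b(Q°))` the map `F` becomes the linear map
`(P, c) ↦ (s • P, t * c)`: the `b(s • Q°)` subtracted by `F` is exactly the correction that
the new second coordinate adds back. Since these coordinates determine `Q`, the iterates of `F`
are read off from the powers `(P, c) ↦ (s ^ k • P, t ^ k * c)`.
-/

open Function

variable {n : ℕ}

theorem ctr_add_bc (Q : Fin n → ℂ) (i : Fin n) : ctr n Q i + bc n Q = Q i :=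
  sub_add_cancel _ _

theorem sum_ctr (Q : Fin n → ℂ) : ∑ i, ctr n Q i = 0 := by
  have hsum : ∑ i, Q i = n * bc n Q := by
    refine (mul_div_cancel_of_imp' fun h => ?_).symm
    obtain rfl : n = 0 := by exact_mod_cast h
    simp
  simp only [ctr, sum_sub_distrib, sum_const, card_univ, Fintype.card_fin, nsmul_eq_mul, hsum,
    sub_self]

theorem bc_mul_add_of_sum_eq_zero (hn : n ≠ 0) {P : Fin n → ℂ} (hP : ∑ i, P i = 0) (s c : ℂ) :
    bc n (fun i => s * P i + c) = c := by
  have hn' : (n : ℂ) ≠ 0 := Nat.cast_ne_zero.mpr hn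
  simp only [bc, sum_add_distrib, ← mul_sum, hP, mul_zero, zero_add, sum_const, card_univ,
    Fintype.card_fin, nsmul_eq_mul]
  field_simp

theorem ctr_mul_add_of_sum_eq_zero (hn : n ≠ 0) {P : Fin n → ℂ} (hP : ∑ i, P i = 0) (s c : ℂ) :
    ctr n (fun i => s * P i + c) = fun i => s * P i := by
  ext i
  simp [ctr, bc_mul_add_of_sum_eq_zero hn hP]

noncomputable def torsionMap (s t : ℂ) (b : (Fin n → ℂ) → ℂ) (Q : Fin n → ℂ) : Fin n → ℂ :=
  fun i => s * ctr n Q i + t * bc n Q + t * b (ctr n Q) - b (fun j => s * ctr n Q j)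

theorem torsionMap_one_one (b : (Fin n → ℂ) → ℂ) : torsionMap 1 1 b = id := by
  ext Q i
  simp [torsionMap, ctr_add_bc]

noncomputable def linearizingCoord (b : (Fin n → ℂ) → ℂ) (Q : Fin n → ℂ) : (Fin n → ℂ) × ℂ :=
  (ctr n Q, bc n Q + b (ctr n Q))

theorem linearizingCoord_injective (b : (Fin n → ℂ) → ℂ) : Injective (linearizingCoord b) := by
  intro Q Q' h
  obtain ⟨hctr, hbc⟩ := Prod.mk.inj h
  rw [hctr, add_left_inj] at hbc
  ext i
  rw [← ctr_add_bc Q, ← ctr_add_bc Q', hctr, hbc]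

theorem semiconj_linearizingCoord_torsionMap (hn : n ≠ 0) (s t : ℂ) (b : (Fin n → ℂ) → ℂ) :
    Semiconj (linearizingCoord b) (torsionMap s t b) (Prod.map (s • ·) (t * ·)) := by
  intro Q
  set c := t * bc n Q + t * b (ctr n Q) - b (fun j => s * ctr n Q j)
  have hT : torsionMap s t b Q = fun i => s * ctr n Q i + c := by
    ext i
    simp only [torsionMap, c]
    ring
  simp only [linearizingCoord, hT, ctr_mul_add_of_sum_eq_zero hn (sum_ctr Q),
    bc_mul_add_of_sum_eq_zero hn (sum_ctr Q), Prod.map_apply]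
  refine Prod.ext rfl ?_
  simp only [c]
  ring

theorem iterate_torsionMap (hn : n ≠ 0) (s t : ℂ) (b : (Fin n → ℂ) → ℂ) (k : ℕ) :
    (torsionMap s t b)^[k] = torsionMap (s ^ k) (t ^ k) b := by
  funext Q
  apply linearizingCoord_injective b
  rw [(semiconj_linearizingCoord_torsionMap hn s t b).iterate_right k Q,
    semiconj_linearizingCoord_torsionMap hn (s ^ k) (t ^ k) b Q, Prod.map_iterate, smul_iterate,
    mul_left_iterate]

theorem torsion_automorphism_formula_general (n m : ℕ) (hn : 0 < n)
    (s t : ℂ) (hs : s ^ m = 1) (ht : t ^ m = 1)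
    (b : (Fin n → ℂ) → ℂ) (F : (Fin n → ℂ) → (Fin n → ℂ))
    (hF : ∀ Q i, F Q i =
      s * ctr n Q i + t * bc n Q + t * b (ctr n Q) - b (fun j => s * ctr n Q j)) :
    F^[m] = id ∧
    ∀ k : ℕ, 1 ≤ k → ∀ Q i, F^[k] Q i =
      s ^ k * ctr n Q i + t ^ k * bc n Q + t ^ k * b (ctr n Q) -
        b (fun j => s ^ k * ctr n Q j) := by
  obtain rfl : F = torsionMap s t b := funext fun Q => funext (hF Q)
  refine ⟨?_, fun k _ Q i => by rw [iterate_torsionMap hn.ne']; rfl⟩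
  rw [iterate_torsionMap hn.ne', hs, ht, torsionMap_one_one]

/-- Let `F(Q) = s·Q° + t·bc(Q) + t·b(Q°) − b(s·Q°)` where `Q° = Q − bc(Q)`,
`s^m = t^m = 1`, and `b` is any function on balanced configurations. Then `F^m = id`;
more generally `F^k(Q) = s^k Q° + t^k bc(Q) + t^k b(Q°) − b(s^k Q°)` for all `k ≥ 1`. -/
theorem torsion_automorphism_formula (n m : ℕ) (hn : 0 < n) (hm : 0 < m)
    (s t : ℂ) (hs : s ^ m = 1) (ht : t ^ m = 1)
    (b : (Fin n → ℂ) → ℂ) (F : (Fin n → ℂ) → (Fin n → ℂ))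
    (hF : ∀ Q i, F Q i =
      s * ctr n Q i + t * bc n Q + t * b (ctr n Q) - b (fun j => s * ctr n Q j)) :
    F^[m] = id ∧
    ∀ k : ℕ, 1 ≤ k → ∀ Q i, F^[k] Q i =
      s ^ k * ctr n Q i + t ^ k * bc n Q + t ^ k * b (ctr n Q) -
        b (fun j => s ^ k * ctr n Q j) :=
  torsion_automorphism_formula_general n m hn s t hs ht b F hF
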